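/- Let S' ⊆ S be finite sets of items, and suppose R(S') = F* where F* is a real number with ∑_{i∈S'}(r_i − F*)v_i = F*. If F* ≤ min_{i ∈ S \ S'} r_i, then R(S) ≥ F*, where R(S) = (∑_{i∈S} r_i v_i)/(1 + ∑_{i∈S} v_i). In words: enlarging an assortment by items whose revenues are all at least the current expected revenue does not decrease the expected revenue. -/

import Mathlib

open Finset

/-- MNL expected revenue of an assortment `S`. -/
noncomputable def mnlR {N : Type*} (r v : N → ℝ) (S : Finset N) : ℝ :=
  (∑ i ∈ S, r i * v i) / (1 + ∑ i ∈ S, v i)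

/-- The θ-level set: items with revenue at least θ. -/
noncomputable def levelSet {N : Type*} [Fintype N] (r : N → ℝ) (θ : ℝ) : Finset N :=
  Finset.univ.filter (fun i => θ ≤ r i)

/-- The revenue potential function F(θ) = R(L_θ). -/
noncomputable def potF {N : Type*} [Fintype N] (r v : N → ℝ) (θ : ℝ) : ℝ :=
  mnlR r v (levelSet r θ)

/-- The right limit F(θ⁺) = R({i : r_i > θ}). -/
noncomputable def potFplus {N : Type*} [Fintype N] (r v : N → ℝ) (θ : ℝ) : ℝ :=
  mnlR r v (Finset.univ.filter (fun i => θ < r i))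

theorem le_mnlR_iff {N : Type*} (r v : N → ℝ) {S : Finset N} (hv : ∀ i ∈ S, 0 ≤ v i)
    (c : ℝ) : c ≤ mnlR r v S ↔ c ≤ ∑ i ∈ S, (r i - c) * v i := by
  have hden : 0 < 1 + ∑ i ∈ S, v i := by
    linarith [sum_nonneg hv]
  have hsurplus : ∑ i ∈ S, (r i - c) * v i = ∑ i ∈ S, r i * v i - c * ∑ i ∈ S, v i := by
    simp only [sub_mul, sum_sub_distrib, mul_sum]
  rw [mnlR, le_div_iff₀ hden, hsurplus]
  constructor <;> intro h <;> linarith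

theorem stmt6_general {N : Type*} [DecidableEq N] (r v : N → ℝ)
    (hv : ∀ i, 0 ≤ v i)
    (S' S : Finset N) (hsub : S' ⊆ S) (Fstar : ℝ)
    (hsum : ∑ i ∈ S', (r i - Fstar) * v i = Fstar)
    (hmin : ∀ i ∈ S \ S', Fstar ≤ r i) :
    Fstar ≤ mnlR r v S := by
  rw [le_mnlR_iff r v (fun i _ => hv i)]
  calc Fstar = ∑ i ∈ S', (r i - Fstar) * v i := hsum.symm
    _ ≤ ∑ i ∈ S, (r i - Fstar) * v i :=
      sum_le_sum_of_subset_of_nonneg hsub fun i hiS hiS' =>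
        mul_nonneg (sub_nonneg.mpr (hmin i (mem_sdiff.mpr ⟨hiS, hiS'⟩))) (hv i)

/-- enlarging an assortment by items with revenues at least the
current expected revenue does not decrease the expected revenue. -/
theorem stmt6 {N : Type*} [DecidableEq N] (r v : N → ℝ)
    (hr : ∀ i, 0 ≤ r i) (hv : ∀ i, 0 ≤ v i)
    (S' S : Finset N) (hsub : S' ⊆ S) (Fstar : ℝ)
    (hR : mnlR r v S' = Fstar)
    (hsum : ∑ i ∈ S', (r i - Fstar) * v i = Fstar)
    (hmin : ∀ i ∈ S \ S', Fstar ≤ r i) :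
    Fstar ≤ mnlR r v S :=
  stmt6_general r v hv S' S hsub Fstar hsum hmin
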